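/- (Theorem 1, case Ŝ ≥ μ.) For constants Ψ₁ > 0, Ψ₂ > 0, 0 < δ < T, and expected service level Ŝ ≥ μ where μ = (Ψ₁/Ψ₂)·1/(δ·T), the connection time T is a best response of the User: for every t ∈ [δ, T], Ψ₁/T + Ψ₂·Ŝ·T ≥ Ψ₁/t + Ψ₂·Ŝ·t. -/

import Mathlib

/-!
U(T) - U(t) = (T - t)(Ψ₂ Ŝ t T - Ψ₁) / (t T), and for `t ≥ δ` the second factor is at least
Ψ₂ Ŝ δ T - Ψ₁ ≥ 0, which is exactly the threshold condition `Ŝ ≥ μ`.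
-/

theorem div_add_mul_sub_div_add_mul (a c : ℝ) {t T : ℝ} (ht : t ≠ 0) (hT : T ≠ 0) :
    (a / T + c * T) - (a / t + c * t) = (T - t) * (c * (t * T) - a) / (t * T) := by
  field_simp
  ring

theorem div_add_mul_le_div_add_mul {a c t T : ℝ} (ht : 0 < t) (htT : t ≤ T)
    (h : a ≤ c * (t * T)) : a / t + c * t ≤ a / T + c * T := by
  have hT : 0 < T := ht.trans_le htT
  rw [← sub_nonneg, div_add_mul_sub_div_add_mul a c ht.ne' hT.ne']
  exact div_nonneg (mul_nonneg (sub_nonneg.2 htT) (sub_nonneg.2 h)) (mul_pos ht hT).le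

theorem le_mul_mul_of_div_mul_one_div_le {Ψ₁ Ψ₂ S x : ℝ} (hΨ₂ : 0 < Ψ₂) (hx : 0 < x)
    (hS : Ψ₁ / Ψ₂ * (1 / x) ≤ S) : Ψ₁ ≤ Ψ₂ * S * x := by
  rw [div_mul_div_comm, mul_one, div_le_iff₀ (mul_pos hΨ₂ hx)] at hS
  linarith

theorem best_response_above_threshold_general
    (Ψ₁ Ψ₂ Shat δ T : ℝ) (hΨ₁ : 0 < Ψ₁) (hΨ₂ : 0 < Ψ₂)
    (hδ : 0 < δ)
    (hShat : Shat ≥ Ψ₁ / Ψ₂ * (1 / (δ * T))) :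
    ∀ t ∈ Set.Icc δ T,
      Ψ₁ / T + Ψ₂ * Shat * T ≥ Ψ₁ / t + Ψ₂ * Shat * t := by
  rintro t ⟨hδt, htT⟩
  have ht : 0 < t := hδ.trans_le hδt
  have hT : 0 < T := ht.trans_le htT
  have hthreshold : Ψ₁ ≤ Ψ₂ * Shat * (δ * T) :=
    le_mul_mul_of_div_mul_one_div_le hΨ₂ (mul_pos hδ hT) hShat
  have hgain : 0 ≤ Ψ₂ * Shat :=
    (pos_of_mul_pos_left (hΨ₁.trans_le hthreshold) (mul_pos hδ hT).le).le
  refine div_add_mul_le_div_add_mul ht htT (hthreshold.trans ?_)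
  gcongr

/-- Theorem 1, case `Shat ≥ μ`: the full visiting time `T` is a best response. -/
theorem best_response_above_threshold
    (Ψ₁ Ψ₂ Shat δ T : ℝ) (hΨ₁ : 0 < Ψ₁) (hΨ₂ : 0 < Ψ₂)
    (hδ : 0 < δ) (hδT : δ < T)
    (hShat : Shat ≥ Ψ₁ / Ψ₂ * (1 / (δ * T))) :
    ∀ t ∈ Set.Icc δ T,
      Ψ₁ / T + Ψ₂ * Shat * T ≥ Ψ₁ / t + Ψ₂ * Shat * t :=
  best_response_above_threshold_general Ψ₁ Ψ₂ Shat δ T hΨ₁ hΨ₂ hδ hShat
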